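/- arXiv:1701.00806 — 6 statements merged into one kernel-verified Lean document; each statement's English description precedes it below -/
import Mathlib

section
/- Let A be a symmetric matrix indexed by V and let S be a proper strongly homogeneous set for A. Then A is Robinsonian if and only if both the restriction A[S] and the contraction A/S are Robinsonian. -/
/-- The consecutive pairs of `l` avoid `z` with respect to the matrix `A`. -/
def AvoidChain {V : Type*} (A : V → V → ℝ) (z : V) (l : List V) : Prop :=
  l.Chain' fun u w => min (A u z) (A w z) < A u w

/-- `l` is a path from `x` to `y` avoiding `z` in `A`: a sequence of distinct
elements starting at `x`, ending at `y`, each consecutive pair avoiding `z`. -/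
def AvoidPath {V : Type*} (A : V → V → ℝ) (z x y : V) (l : List V) : Prop :=
  l.Nodup ∧ l.head? = some x ∧ l.getLast? = some y ∧ AvoidChain A z l

/-- `x ~^z y`: there is a path from `x` to `y` avoiding `z` in `A`. -/
def Avoids {V : Type*} (A : V → V → ℝ) (z x y : V) : Prop :=
  ∃ l, AvoidPath A z x y l

/-- `{x,y,z}` is a weighted asteroidal triple of `A`. -/
def IsWAT {V : Type*} (A : V → V → ℝ) (x y z : V) : Prop :=
  x ≠ y ∧ y ≠ z ∧ x ≠ z ∧ Avoids A z x y ∧ Avoids A x y z ∧ Avoids A y z x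

/-- `π` is a Robinson ordering of `A`. -/
def IsRobinsonOrdering {V : Type*} [Fintype V] (A : V → V → ℝ)
    (π : Fin (Fintype.card V) ≃ V) : Prop :=
  ∀ i j k : Fin (Fintype.card V), i < j → j < k →
    A (π i) (π k) ≤ min (A (π i) (π j)) (A (π j) (π k))

/-- `A` is Robinsonian: it admits a Robinson ordering. -/
def Robinsonian {V : Type*} [Fintype V] (A : V → V → ℝ) : Prop :=
  ∃ π : Fin (Fintype.card V) ≃ V, IsRobinsonOrdering A π

/-- `S` is strongly homogeneous for `A`. -/
def StronglyHomogeneous {V : Type*} [DecidableEq V] (A : V → V → ℝ) (S : Finset V) : Prop :=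
  ∀ x ∉ S, ∀ y ∈ S, ∀ z ∈ S, A x y = A x z ∧ A x y ≤ A y z

/-- `a` is critical for `A`: between any two distinct elements of `V \ {a}`
there is a path avoiding `a`. -/
def IsCritical {V : Type*} (A : V → V → ℝ) (a : V) : Prop :=
  ∀ x y : V, x ≠ a → y ≠ a → x ≠ y → Avoids A a x y

/-- The similarity layers of `A` rooted at `a`, together with the union of the
layers so far: `(simLayersAux A a n).1` is the `n`-th layer `X_n` and
`(simLayersAux A a n).2 = X_0 ∪ ⋯ ∪ X_n`. -/
def simLayersAux {V : Type*} (A : V → V → ℝ) (a : V) : ℕ → Set V × Set V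
  | 0 => ({a}, {a})
  | n + 1 =>
    let U := (simLayersAux A a n).2
    let L := { y | y ∉ U ∧ ∀ x ∈ U, ∀ z ∉ U, A x z ≤ A x y }
    (L, U ∪ L)

/-- The `n`-th similarity layer `X_n` of `A` rooted at `a`. -/
def simLayer {V : Type*} (A : V → V → ℝ) (a : V) (n : ℕ) : Set V :=
  (simLayersAux A a n).1

/-
Strong homogeneity says that every `x ∉ S` sees all of `S` at the same level, and that this level
is at most any similarity inside `S`. So `A` agrees with the contraction `A/S` on pairs that are not
both in `S`, and a Robinson order of `A` is obtained from one of `A/S` by substituting a Robinson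
order of `A[S]` for the representative `s`: compare two elements lexicographically, first by the
position of their representatives in `A/S`, then by their positions in `A[S]`.
-/

def IsRobinsonKey {V α : Type*} [LinearOrder α] (A : V → V → ℝ) (f : V → α) : Prop :=
  ∀ x y z, f x < f y → f y < f z → A x z ≤ min (A x y) (A y z)

section RobinsonKey

variable {V W α : Type*} {A : V → V → ℝ}

theorem IsRobinsonKey.robinsonian [Fintype V] [LinearOrder α] {f : V → α}
    (hf : Function.Injective f) (h : IsRobinsonKey A f) : Robinsonian A := by
  let : LinearOrder V := LinearOrder.lift' f hf
  let e : Fin (Fintype.card V) ≃o V := monoEquivOfFin V rfl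
  exact ⟨e.toEquiv, fun i j k hij hjk => h _ _ _ (e.strictMono hij) (e.strictMono hjk)⟩

theorem IsRobinsonOrdering.isRobinsonKey_symm [Fintype V] {π : Fin (Fintype.card V) ≃ V}
    (h : IsRobinsonOrdering A π) : IsRobinsonKey A π.symm := by
  intro x y z hxy hyz
  simpa using h _ _ _ hxy hyz

theorem IsRobinsonKey.comp [LinearOrder α] {f : V → α} (h : IsRobinsonKey A f) (g : W → V) :
    IsRobinsonKey (fun u v => A (g u) (g v)) (f ∘ g) :=
  fun _ _ _ => h _ _ _

theorem Robinsonian.comp_injective [Fintype V] [Fintype W] (hA : Robinsonian A) {g : W → V}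
    (hg : Function.Injective g) : Robinsonian (fun u v => A (g u) (g v)) := by
  obtain ⟨π, hπ⟩ := hA
  exact (hπ.isRobinsonKey_symm.comp g).robinsonian (π.symm.injective.comp hg)

end RobinsonKey

section Contraction

variable {V α β : Type*} [Fintype V] [DecidableEq V] {S : Finset V} {s : V}

/-- The element of the index set of the contraction `A/S` that represents `v`. -/
def contractionRep (S : Finset V) (s : V) (v : V) : {v : V // v ∈ (Finset.univ \ S) ∪ {s}} :=
  if h : v ∈ S then ⟨s, by simp⟩ else ⟨v, by simp [h]⟩

theorem contractionRep_eq_of_mem {x y : V} (hx : x ∈ S) (hy : y ∈ S) :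
    contractionRep S s x = contractionRep S s y := by
  simp [contractionRep, hx, hy]

theorem mem_and_mem_of_contractionRep_eq (hs : s ∈ S) {x y : V}
    (h : contractionRep S s x = contractionRep S s y) (hne : x ≠ y) : x ∈ S ∧ y ∈ S := by
  have h' := congrArg Subtype.val h
  simp only [contractionRep, apply_dite Subtype.val] at h'
  split_ifs at h' with hx hy hy
  · exact ⟨hx, hy⟩
  · exact absurd (h' ▸ hs) hy
  · exact absurd (h' ▸ hs) hx
  · exact absurd h' hne

theorem StronglyHomogeneous.apply_contractionRep {A : V → V → ℝ}
    (hsym : ∀ u v : V, A u v = A v u) (hhom : StronglyHomogeneous A S) (hs : s ∈ S) {x z : V}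
    (hxz : ¬(x ∈ S ∧ z ∈ S)) : A (contractionRep S s x) (contractionRep S s z) = A x z := by
  by_cases hx : x ∈ S <;> by_cases hz : z ∈ S <;>
    simp only [contractionRep, hx, hz, dite_true, dite_false]
  · exact absurd ⟨hx, hz⟩ hxz
  · rw [hsym s, hsym x, (hhom z hz s hs x hx).1]
  · exact (hhom x hx s hs z hz).1

/-- Position of `v` in the order substituting the order `kS` of `S` for `s` in the order `kW` of
the contraction; elements outside `S` get the dummy second coordinate `⊥`. -/
def contractionLexKey (S : Finset V) (s : V) (kS : {v : V // v ∈ S} → β)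
    (kW : {v : V // v ∈ (Finset.univ \ S) ∪ {s}} → α) (v : V) : α ×ₗ WithBot β :=
  toLex (kW (contractionRep S s v), if h : v ∈ S then (kS ⟨v, h⟩ : WithBot β) else ⊥)

theorem contractionLexKey_injective (hs : s ∈ S) {kS : {v : V // v ∈ S} → β}
    {kW : {v : V // v ∈ (Finset.univ \ S) ∪ {s}} → α}
    (hkS : Function.Injective kS) (hkW : Function.Injective kW) :
    Function.Injective (contractionLexKey S s kS kW) := by
  intro x y hxy
  obtain ⟨hrep, hsnd⟩ := Prod.ext_iff.mp (toLex.injective hxy)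
  by_contra hne
  obtain ⟨hx, hy⟩ := mem_and_mem_of_contractionRep_eq hs (hkW hrep) hne
  simp only [hx, hy, dite_true, WithBot.coe_inj] at hsnd
  exact hne (congrArg Subtype.val (hkS hsnd))

variable [LinearOrder α] [LinearOrder β]

theorem lt_or_mem_of_contractionLexKey_lt (hs : s ∈ S) {kS : {v : V // v ∈ S} → β}
    {kW : {v : V // v ∈ (Finset.univ \ S) ∪ {s}} → α} (hkW : Function.Injective kW) {x y : V}
    (h : contractionLexKey S s kS kW x < contractionLexKey S s kS kW y) :
    kW (contractionRep S s x) < kW (contractionRep S s y) ∨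
      ∃ (hx : x ∈ S) (hy : y ∈ S), kS ⟨x, hx⟩ < kS ⟨y, hy⟩ := by
  rcases Prod.Lex.lt_iff.mp h with hlt | ⟨heq, hsnd⟩
  · exact Or.inl hlt
  · have hne : x ≠ y := by rintro rfl; exact hsnd.false
    obtain ⟨hx, hy⟩ := mem_and_mem_of_contractionRep_eq hs (hkW heq) hne
    simp only [contractionLexKey, ofLex_toLex, hx, hy, dite_true, WithBot.coe_lt_coe] at hsnd
    exact Or.inr ⟨hx, hy, hsnd⟩

theorem StronglyHomogeneous.isRobinsonKey_contractionLexKey {A : V → V → ℝ}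
    (hsym : ∀ u v : V, A u v = A v u) (hhom : StronglyHomogeneous A S) (hs : s ∈ S)
    {kS : {v : V // v ∈ S} → β} {kW : {v : V // v ∈ (Finset.univ \ S) ∪ {s}} → α}
    (hkS : IsRobinsonKey (fun u v : {v : V // v ∈ S} => A u v) kS)
    (hkW : IsRobinsonKey (fun u v : {v : V // v ∈ (Finset.univ \ S) ∪ {s}} => A u v) kW)
    (hkW_inj : Function.Injective kW) : IsRobinsonKey A (contractionLexKey S s kS kW) := by
  have not_both {a b : V} (hab : kW (contractionRep S s a) < kW (contractionRep S s b)) :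
      ¬(a ∈ S ∧ b ∈ S) := fun ⟨ha, hb⟩ => hab.ne (by rw [contractionRep_eq_of_mem ha hb])
  intro x y z hxy hyz
  rcases lt_or_mem_of_contractionLexKey_lt hs hkW_inj hxy with hxy | ⟨hx, hy, hxy⟩ <;>
    rcases lt_or_mem_of_contractionLexKey_lt hs hkW_inj hyz with hyz | ⟨hy', hz, hyz⟩
  · simpa only [hhom.apply_contractionRep hsym hs (not_both hxy),
      hhom.apply_contractionRep hsym hs (not_both hyz),
      hhom.apply_contractionRep hsym hs (not_both (hxy.trans hyz))] using hkW _ _ _ hxy hyz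
  · have hx : x ∉ S := fun hx => not_both hxy ⟨hx, hy'⟩
    obtain ⟨hxyz, hxS⟩ := hhom x hx y hy' z hz
    rw [← hxyz]
    exact le_min le_rfl hxS
  · have hz : z ∉ S := fun hz => not_both hyz ⟨hy, hz⟩
    obtain ⟨hzxy, hzS⟩ := hhom z hz x hx y hy
    rw [hsym x z, hsym y z]
    exact le_min hzS hzxy.le
  · exact hkS ⟨x, hx⟩ ⟨y, hy⟩ ⟨z, hz⟩ hxy hyz

end Contraction

theorem stmt_3_general {V : Type*} [Fintype V] [DecidableEq V] (A : V → V → ℝ)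
    (hsym : ∀ u v : V, A u v = A v u)
    (S : Finset V) (hhom : StronglyHomogeneous A S)
    (s : V) (hs : s ∈ S) :
    Robinsonian A ↔
      (Robinsonian (fun u v : {v : V // v ∈ S} => A u v) ∧
       Robinsonian (fun u v : {v : V // v ∈ (Finset.univ \ S) ∪ {s}} => A u v)) := by
  constructor
  · intro hA
    exact ⟨hA.comp_injective Subtype.val_injective, hA.comp_injective Subtype.val_injective⟩
  · rintro ⟨⟨σ, hσ⟩, ⟨π, hπ⟩⟩
    exact (hhom.isRobinsonKey_contractionLexKey hsym hs hσ.isRobinsonKey_symm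
      hπ.isRobinsonKey_symm π.symm.injective).robinsonian
      (contractionLexKey_injective hs σ.symm.injective π.symm.injective)

theorem stmt_3 {V : Type*} [Fintype V] [DecidableEq V] (A : V → V → ℝ)
    (hsym : ∀ u v : V, A u v = A v u)
    (S : Finset V) (hhom : StronglyHomogeneous A S)
    (hcard : 2 ≤ S.card) (hproper : S.card ≤ Fintype.card V - 1)
    (s : V) (hs : s ∈ S) :
    Robinsonian A ↔
      (Robinsonian (fun u v : {v : V // v ∈ S} => A u v) ∧
       Robinsonian (fun u v : {v : V // v ∈ (Finset.univ \ S) ∪ {s}} => A u v)) :=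
  stmt_3_general A hsym S hhom s hs
end

section
/- Let A be a symmetric matrix indexed by V, let S be a proper strongly homogeneous set for A with s ∈ S. If σ₁ = (x_1, ..., x_p) is a Robinson ordering of A[S] and σ₂ = (y_1, ..., y_{j-1}, s, y_j, ..., y_q) is a Robinson ordering of A/S, then σ = (y_1, ..., y_{j-1}, x_1, ..., x_p, y_j, ..., y_q) is a Robinson ordering of A. -/
/-- The Robinson condition for the list of indices `l` with respect to `B`. -/
def IsRobinsonList {V : Type*} (B : V → V → ℝ) (l : List V) : Prop :=
  ∀ (i j k : ℕ) (hij : i < j) (hjk : j < k) (hk : k < l.length),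
    B (l[i]'(by omega)) (l[k]'hk) ≤
      min (B (l[i]'(by omega)) (l[j]'(by omega))) (B (l[j]'(by omega)) (l[k]'hk))

/-- `l` is a Robinson ordering of the principal submatrix of `B` indexed by `W`. -/
def RobinsonListOf {V : Type*} [DecidableEq V] (B : V → V → ℝ) (W : Finset V)
    (l : List V) : Prop :=
  l.Nodup ∧ (∀ v : V, v ∈ l ↔ v ∈ W) ∧ IsRobinsonList B l


/-! `x :: l` is a Robinson list iff `l` is and `x` forms a Robinson triple with every pair `b`
before `c` in `l`. Peeling off `p` and then `σ₁` this way, every triple meeting `S` is settled by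
strong homogeneity: an element outside `S` sees all of `S` alike, so a member of `S` may be traded
for `s`, and two members of `S` are at least as similar to each other as to anything outside. -/

section

variable {V : Type*}

theorem isRobinsonList_cons {B : V → V → ℝ} {x : V} {l : List V} :
    IsRobinsonList B (x :: l) ↔
      l.Pairwise (fun b c => B x c ≤ min (B x b) (B b c)) ∧ IsRobinsonList B l := by
  rw [List.pairwise_iff_getElem]
  constructor
  · intro h
    exact ⟨fun j k hj hk hjk => h 0 (j + 1) (k + 1) (by omega) (by omega) (by simpa),
      fun i j k hij hjk hk => h (i + 1) (j + 1) (k + 1) (by omega) (by omega) (by simpa)⟩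
  · rintro ⟨hx, hl⟩ (_ | i) (_ | j) (_ | k) hij hjk hk
    all_goals try omega
    · exact hx j k _ _ (by omega)
    · exact hl i j k (by omega) (by omega) _

namespace StronglyHomogeneous

variable [DecidableEq V] {A : V → V → ℝ} {S : Finset V}

theorem apply_le_min_of_notMem_left (hhom : StronglyHomogeneous A S) {x y z : V}
    (hx : x ∉ S) (hy : y ∈ S) (hz : z ∈ S) : A x z ≤ min (A x y) (A y z) := by
  obtain ⟨hxyz, hle⟩ := hhom x hx y hy z hz
  exact le_min hxyz.ge (hxyz ▸ hle)

theorem apply_le_min_of_notMem_right (hsym : ∀ u v : V, A u v = A v u)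
    (hhom : StronglyHomogeneous A S) {x y z : V}
    (hx : x ∈ S) (hy : y ∈ S) (hz : z ∉ S) : A x z ≤ min (A x y) (A y z) := by
  obtain ⟨hzxy, hle⟩ := hhom z hz x hx y hy
  rw [hsym x z, hsym y z]
  exact le_min hle hzxy.le

theorem apply_eq_apply_of_notMem (hsym : ∀ u v : V, A u v = A v u)
    (hhom : StronglyHomogeneous A S)
    {x y z : V} (hx : x ∉ S) (hy : y ∈ S) (hz : z ∈ S) : A y x = A z x := by
  rw [hsym y, hsym z, (hhom x hx y hy z hz).1]

end StronglyHomogeneous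

namespace IsRobinsonList

variable [DecidableEq V] {A : V → V → ℝ} {S : Finset V} {s : V} {m q : List V}

theorem append_of_stronglyHomogeneous (hsym : ∀ u v : V, A u v = A v u)
    (hhom : StronglyHomogeneous A S) (hs : s ∈ S) (hmS : ∀ x ∈ m, x ∈ S)
    (hqS : ∀ x ∈ q, x ∉ S) (hm : IsRobinsonList A m) (hsq : IsRobinsonList A (s :: q)) :
    IsRobinsonList A (m ++ q) := by
  induction m with
  | nil => exact (isRobinsonList_cons.1 hsq).2
  | cons x m ih =>
    rw [List.forall_mem_cons] at hmS
    obtain ⟨hxm, hm⟩ := isRobinsonList_cons.1 hm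
    rw [List.cons_append, isRobinsonList_cons, List.pairwise_append]
    refine ⟨⟨hxm, ?_, ?_⟩, ih hmS.2 hm⟩
    · refine (isRobinsonList_cons.1 hsq).1.imp_of_mem fun hb hc hsbc => ?_
      rwa [hhom.apply_eq_apply_of_notMem hsym (hqS _ hb) hmS.1 hs,
        hhom.apply_eq_apply_of_notMem hsym (hqS _ hc) hmS.1 hs]
    · exact fun b hb c hc => hhom.apply_le_min_of_notMem_right hsym hmS.1 (hmS.2 b hb) (hqS c hc)

theorem substitute_stronglyHomogeneous {p : List V} (hsym : ∀ u v : V, A u v = A v u)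
    (hhom : StronglyHomogeneous A S) (hs : s ∈ S) (hmS : ∀ x ∈ m, x ∈ S)
    (hpS : ∀ x ∈ p, x ∉ S) (hqS : ∀ x ∈ q, x ∉ S)
    (hm : IsRobinsonList A m) (h : IsRobinsonList A (p ++ s :: q)) :
    IsRobinsonList A (p ++ m ++ q) := by
  induction p with
  | nil => exact hm.append_of_stronglyHomogeneous hsym hhom hs hmS hqS h
  | cons y p ih =>
    rw [List.forall_mem_cons] at hpS
    rw [List.cons_append] at h
    obtain ⟨hy, h⟩ := isRobinsonList_cons.1 h
    rw [List.pairwise_append, List.pairwise_cons] at hy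
    obtain ⟨hyp, ⟨hys, hyq⟩, hyps⟩ := hy
    have hyS (b) (hb : b ∈ S) : A y b = A y s := (hhom y hpS.1 b hb s hs).1
    rw [List.cons_append, List.cons_append, isRobinsonList_cons, List.pairwise_append,
      List.pairwise_append]
    refine ⟨⟨⟨hyp, ?_, ?_⟩, hyq, ?_⟩, ih hpS.2 h⟩
    · exact List.pairwise_of_forall_mem_list fun b hb c hc =>
        hhom.apply_le_min_of_notMem_left hpS.1 (hmS b hb) (hmS c hc)
    · intro a ha b hb
      have hab : A a b = A a s := (hhom a (hpS.2 a ha) b (hmS b hb) s hs).1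
      rw [hyS b (hmS b hb), hab]
      exact hyps a ha s List.mem_cons_self
    · intro a ha b hb
      rcases List.mem_append.1 ha with ha | ha
      · exact hyps a ha b (List.mem_cons_of_mem s hb)
      · rw [hyS a (hmS a ha), hhom.apply_eq_apply_of_notMem hsym (hqS b hb) (hmS a ha) hs]
        exact hys b hb

end IsRobinsonList

end

theorem stmt_4_general {V : Type*} [Fintype V] [DecidableEq V] (A : V → V → ℝ)
    (hsym : ∀ u v : V, A u v = A v u)
    (S : Finset V) (hhom : StronglyHomogeneous A S)
    (s : V) (hs : s ∈ S)
    (σ₁ : List V) (hσ₁ : RobinsonListOf A S σ₁)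
    (p q : List V)
    (hσ₂ : RobinsonListOf A ((Finset.univ \ S) ∪ {s}) (p ++ s :: q)) :
    RobinsonListOf A Finset.univ (p ++ σ₁ ++ q) := by
  obtain ⟨hnodup₁, hmem₁, hrob₁⟩ := hσ₁
  obtain ⟨hnodup₂, hmem₂, hrob₂⟩ := hσ₂
  obtain ⟨hspq, hnodup_pq⟩ := List.nodup_cons.1 (List.nodup_middle.1 hnodup₂)
  have hpqS : ∀ x ∈ p ++ q, x ∉ S := by
    intro x hx hxS
    obtain rfl : x = s := by
      simpa [hxS] using (hmem₂ x).1 (List.mem_append.2 ((List.mem_append.1 hx).imp id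
        (List.mem_cons_of_mem s)))
    exact hspq hx
  refine ⟨?_, fun v => iff_of_true ?_ (Finset.mem_univ v), ?_⟩
  · rw [(List.perm_append_comm.append_right q).nodup_iff, List.append_assoc, List.nodup_append]
    exact ⟨hnodup₁, hnodup_pq, fun a ha b hb hab => hpqS b hb (hab ▸ (hmem₁ a).1 ha)⟩
  · by_cases hv : v ∈ S
    · exact List.mem_append_left q (List.mem_append_right p ((hmem₁ v).2 hv))
    · rcases List.mem_append.1 ((hmem₂ v).2 (by simp [hv])) with hvp | hvq
      · exact List.mem_append_left q (List.mem_append_left σ₁ hvp)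
      · rcases List.mem_cons.1 hvq with rfl | hvq
        · exact absurd hs hv
        · exact List.mem_append_right _ hvq
  · exact hrob₁.substitute_stronglyHomogeneous hsym hhom hs (fun x hx => (hmem₁ x).1 hx)
      (fun x hx => hpqS x (List.mem_append_left q hx))
      (fun x hx => hpqS x (List.mem_append_right p hx)) hrob₂

theorem stmt_4 {V : Type*} [Fintype V] [DecidableEq V] (A : V → V → ℝ)
    (hsym : ∀ u v : V, A u v = A v u)
    (S : Finset V) (hhom : StronglyHomogeneous A S)
    (hcard : 2 ≤ S.card) (hproper : S.card ≤ Fintype.card V - 1)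
    (s : V) (hs : s ∈ S)
    (σ₁ : List V) (hσ₁ : RobinsonListOf A S σ₁)
    (p q : List V)
    (hσ₂ : RobinsonListOf A ((Finset.univ \ S) ∪ {s}) (p ++ s :: q)) :
    RobinsonListOf A Finset.univ (p ++ σ₁ ++ q) :=
  stmt_4_general A hsym S hhom s hs σ₁ hσ₁ p q hσ₂
end

section
/- Every symmetric matrix A indexed by a finite set V with |V| ≥ 2 has a critical element or a proper strongly homogeneous set. -/
open Finset

section

variable {V : Type*}

section Minimizers

variable {α : Type*} [LinearOrder α] (T : Finset V) (f : V → α)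

def minimizers : Finset V :=
  T.filter fun t => ∀ t' ∈ T, f t ≤ f t'

variable {T f}

theorem minimizers_subset : minimizers T f ⊆ T :=
  filter_subset _ _

theorem minimizers_nonempty (hT : T.Nonempty) : (minimizers T f).Nonempty := by
  obtain ⟨t, ht, hmin⟩ := T.exists_min_image f hT
  exact ⟨t, mem_filter.2 ⟨ht, hmin⟩⟩

theorem le_of_mem_minimizers {t t' : V} (ht : t ∈ minimizers T f) (ht' : t' ∈ T) :
    f t ≤ f t' :=
  (mem_filter.1 ht).2 t' ht'

theorem eq_of_mem_minimizers {t t' : V} (ht : t ∈ minimizers T f)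
    (ht' : t' ∈ minimizers T f) : f t = f t' :=
  le_antisymm (le_of_mem_minimizers ht (minimizers_subset ht'))
    (le_of_mem_minimizers ht' (minimizers_subset ht))

theorem lt_of_mem_minimizers_of_notMem {t w : V} (ht : t ∈ minimizers T f) (hw : w ∈ T)
    (hw' : w ∉ minimizers T f) : f t < f w := by
  obtain ⟨t', ht', hlt⟩ : ∃ t' ∈ T, f t' < f w := by
    simpa [minimizers, hw] using hw'
  exact (le_of_mem_minimizers ht ht').trans_lt hlt

end Minimizers

/-- Two elements are adjacent when the pair `{u, w}` alone is a path avoiding `z`. -/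
def avoidGraph (A : V → V → ℝ) (z : V) : SimpleGraph V :=
  SimpleGraph.fromRel fun u w => min (A u z) (A w z) < A u w

theorem avoidGraph_adj_of_lt {A : V → V → ℝ} {z u w : V} (hne : u ≠ w)
    (h : min (A u z) (A w z) < A u w) : (avoidGraph A z).Adj u w :=
  (SimpleGraph.fromRel_adj _ u w).2 ⟨hne, Or.inl h⟩

theorem avoids_of_reachable {A : V → V → ℝ} (hsym : ∀ u v : V, A u v = A v u) {z x y : V}
    (h : (avoidGraph A z).Reachable x y) : Avoids A z x y := by
  classical
  obtain ⟨w⟩ := h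
  let q := w.toPath
  refine ⟨q.1.support, q.isPath.support_nodup, ?_, ?_, ?_⟩
  · simp [List.head?_eq_some_head q.1.support_ne_nil]
  · simp [List.getLast?_eq_some_getLast q.1.support_ne_nil]
  · refine q.1.isChain_adj_support.imp fun u v huv => ?_
    rcases ((SimpleGraph.fromRel_adj _ u v).1 huv).2 with h | h
    · exact h
    · rwa [min_comm, hsym v u] at h

variable {A : V → V → ℝ}

def StronglyHomogeneousIn (A : V → V → ℝ) (W S : Finset V) : Prop :=
  ∀ x ∈ W, x ∉ S → ∀ y ∈ S, ∀ z ∈ S, A x y = A x z ∧ A x y ≤ A y z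

def HasHomogeneousBlock (A : V → V → ℝ) (W : Finset V) (c : ℝ) : Prop :=
  ∃ S ⊆ W, 2 ≤ S.card ∧ StronglyHomogeneousIn A W S ∧ ∀ s ∈ S, ∀ s' ∈ S, c ≤ A s s'

def IsCriticalBelow (A : V → V → ℝ) (W : Finset V) (c : ℝ) (y : V) : Prop :=
  ∀ u ∈ W, u ≠ y → ∃ h ∈ W, (avoidGraph A y).Reachable u h ∧ A h y < c

theorem isCriticalBelow_of_diag_lt {W : Finset V} {c : ℝ} {y : V} (hy : y ∈ W)
    (hyc : A y y < c) (hoff : ∀ u ∈ W, ∀ w ∈ W, u ≠ w → c ≤ A u w) :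
    IsCriticalBelow A W c y := fun u hu huy =>
  ⟨y, hy, (avoidGraph_adj_of_lt huy
    ((min_le_right _ _).trans_lt (hyc.trans_le (hoff u hu y hy huy)))).reachable, hyc⟩

/-- The elements of `W` outside `U ∪ T` are still to be moved into `U`. -/
structure IsSplitStage (A : V → V → ℝ) (W : Finset V) (p : V) (U T : Finset V) : Prop where
  mem_left : p ∈ U
  left_subset : U ⊆ W
  right_subset : T ⊆ W
  disjoint : Disjoint U T
  right_nonempty : T.Nonempty
  uniform : ∀ x ∈ U, ∀ t ∈ T, ∀ t' ∈ T, A x t = A x t'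
  reachable : ∀ t ∈ T, ∀ u ∈ U, (avoidGraph A t).Reachable u p
  right_minimizes : ∀ t ∈ T, ∀ z ∈ W, z ≠ p → A p t ≤ A p z
  separated : ∀ z ∈ W, z ∉ U → z ∉ T → ∃ x ∈ U, ∀ t ∈ T, A x t < A x z

namespace IsSplitStage

variable {W U T : Finset V} {p : V}

theorem notMem_right (h : IsSplitStage A W p U T) : p ∉ T :=
  Finset.disjoint_left.1 h.disjoint h.mem_left

theorem exists_bound (h : IsSplitStage A W p U T) :
    ∃ c, (∀ x ∈ U, ∀ t ∈ T, A x t ≤ c) ∧ ∀ t ∈ T, ∃ x ∈ U, A x t = c := by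
  obtain ⟨t₀, ht₀⟩ := h.right_nonempty
  obtain ⟨x₀, hx₀, hmax⟩ := U.exists_max_image (A · t₀) ⟨p, h.mem_left⟩
  refine ⟨A x₀ t₀, fun x hx t ht => ?_, fun t ht => ⟨x₀, hx₀, h.uniform x₀ hx₀ t ht t₀ ht₀⟩⟩
  rw [h.uniform x hx t ht t₀ ht₀]
  exact hmax x hx

theorem reachable_of_lt (h : IsSplitStage A W p U T) {c : ℝ}
    (hc : ∀ t ∈ T, ∃ x ∈ U, A x t = c) {y u : V} (hy : y ∈ T) (hu : u ∈ T) (hlt : A u y < c) :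
    (avoidGraph A y).Reachable u p := by
  obtain ⟨x, hx, hxc⟩ := hc y hy
  have hadj : (avoidGraph A y).Adj x u := by
    refine avoidGraph_adj_of_lt (fun hxu => Finset.disjoint_left.1 h.disjoint hx (hxu ▸ hu)) ?_
    rw [← h.uniform x hx y hy u hu, hxc]
    exact (min_le_right _ _).trans_lt hlt
  exact hadj.symm.reachable.trans (h.reachable y hy x hx)

variable [DecidableEq V]

theorem singleton (hp : p ∈ W) (hW : (W.erase p).Nonempty) :
    IsSplitStage A W p {p} (minimizers (W.erase p) (A p ·)) where
  mem_left := mem_singleton_self p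
  left_subset := singleton_subset_iff.2 hp
  right_subset := minimizers_subset.trans (erase_subset p W)
  disjoint := disjoint_singleton_left.2 fun h => (mem_erase.1 (minimizers_subset h)).1 rfl
  right_nonempty := minimizers_nonempty hW
  uniform x hx t ht t' ht' := by
    rw [mem_singleton.1 hx]
    exact eq_of_mem_minimizers ht ht'
  reachable t _ u hu := by rw [mem_singleton.1 hu]
  right_minimizes t ht z hz hzp := le_of_mem_minimizers ht (mem_erase.2 ⟨hzp, hz⟩)
  separated z hz hzp hzT := ⟨p, mem_singleton_self p, fun _ ht =>
    lt_of_mem_minimizers_of_notMem ht (mem_erase.2 ⟨by simpa using hzp, hz⟩) hzT⟩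

theorem insert (h : IsSplitStage A W p U T) {z : V} (hz : z ∈ W) (hzU : z ∉ U) (hzT : z ∉ T) :
    IsSplitStage A W p (insert z U) (minimizers T (A z ·)) where
  mem_left := mem_insert_of_mem h.mem_left
  left_subset := insert_subset hz h.left_subset
  right_subset := minimizers_subset.trans h.right_subset
  disjoint := disjoint_insert_left.2
    ⟨fun hz' => hzT (minimizers_subset hz'), h.disjoint.mono_right minimizers_subset⟩
  right_nonempty := minimizers_nonempty h.right_nonempty
  uniform x hx t ht t' ht' := by
    rcases mem_insert.1 hx with rfl | hx
    · exact eq_of_mem_minimizers ht ht'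
    · exact h.uniform x hx t (minimizers_subset ht) t' (minimizers_subset ht')
  reachable t ht u hu := by
    rcases mem_insert.1 hu with rfl | hu
    · obtain ⟨x, hx, hlt⟩ := h.separated u hz hzU hzT
      have hadj : (avoidGraph A t).Adj x u := avoidGraph_adj_of_lt
        (fun hxu => hzU (hxu ▸ hx)) ((min_le_left _ _).trans_lt (hlt t (minimizers_subset ht)))
      exact hadj.symm.reachable.trans (h.reachable t (minimizers_subset ht) x hx)
    · exact h.reachable t (minimizers_subset ht) u hu
  right_minimizes t ht := h.right_minimizes t (minimizers_subset ht)
  separated w hw hwU hwT := by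
    rw [mem_insert, not_or] at hwU
    by_cases hwT' : w ∈ T
    · exact ⟨z, mem_insert_self z U, fun t ht => lt_of_mem_minimizers_of_notMem ht hwT' hwT⟩
    · obtain ⟨x, hx, hlt⟩ := h.separated w hw hwU.2 hwT'
      exact ⟨x, mem_insert_of_mem hx, fun t ht => hlt t (minimizers_subset ht)⟩

theorem stronglyHomogeneousIn (h : IsSplitStage A W p U T) (hUT : U ∪ T = W) {S : Finset V}
    (hST : S ⊆ T) (hS : StronglyHomogeneousIn A T S) {c : ℝ} (hc : ∀ x ∈ U, ∀ t ∈ T, A x t ≤ c)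
    (hfloor : ∀ s ∈ S, ∀ s' ∈ S, c ≤ A s s') : StronglyHomogeneousIn A W S := by
  intro x hx hxS s hs s' hs'
  rcases mem_union.1 (hUT ▸ hx) with hxU | hxT
  · exact ⟨h.uniform x hxU s (hST hs) s' (hST hs'),
      (hc x hxU s (hST hs)).trans (hfloor s hs s' hs')⟩
  · exact hS x hxT hxS s hs s' hs'

theorem hasHomogeneousBlock (h : IsSplitStage A W p U T) (hUT : U ∪ T = W) {c c₀ : ℝ}
    (hc₀ : ∀ x ∈ U, ∀ t ∈ T, A x t ≤ c₀) (hT : HasHomogeneousBlock A T (max c c₀)) :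
    HasHomogeneousBlock A W c := by
  obtain ⟨S, hST, hS2, hS, hfloor⟩ := hT
  refine ⟨S, hST.trans (hUT ▸ subset_union_right), hS2,
    h.stronglyHomogeneousIn hUT hST hS (fun x hx t ht => (hc₀ x hx t ht).trans (le_max_right _ _))
      hfloor, fun s hs s' hs' => (le_max_left _ _).trans (hfloor s hs s' hs')⟩

theorem isCriticalBelow (h : IsSplitStage A W p U T) (hUT : U ∪ T = W) {c c₀ : ℝ}
    (hc₀ : ∀ t ∈ T, ∃ x ∈ U, A x t = c₀) {y : V} (hy : y ∈ T) (hpy : A p y < c)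
    (hcrit : IsCriticalBelow A T (max c c₀) y) : IsCriticalBelow A W c y := by
  have hpW : p ∈ W := h.left_subset h.mem_left
  intro u hu huy
  rcases mem_union.1 (hUT ▸ hu) with huU | huT
  · exact ⟨p, hpW, h.reachable y hy u huU, hpy⟩
  obtain ⟨k, hkT, hreach, hlt⟩ := hcrit u huT huy
  rcases lt_max_iff.1 hlt with hkc | hkc₀
  · exact ⟨k, h.right_subset hkT, hreach, hkc⟩
  · exact ⟨p, hpW, hreach.trans (h.reachable_of_lt hc₀ hy hkT hkc₀), hpy⟩

theorem reachable_of_isCriticalBelow (h : IsSplitStage A W p U T) (hUT : U ∪ T = W) {c₀ : ℝ}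
    (hc₀ : ∀ t ∈ T, ∃ x ∈ U, A x t = c₀) {y : V} (hy : y ∈ T)
    (hcrit : IsCriticalBelow A T c₀ y) {u : V} (hu : u ∈ W) (huy : u ≠ y) :
    (avoidGraph A y).Reachable u p := by
  rcases mem_union.1 (hUT ▸ hu) with huU | huT
  · exact h.reachable y hy u huU
  · obtain ⟨k, hkT, hreach, hlt⟩ := hcrit u huT huy
    exact hreach.trans (h.reachable_of_lt hc₀ hy hkT hlt)

end IsSplitStage

variable [DecidableEq V]

theorem IsSplitStage.exists_union_eq {W U T : Finset V} {p : V}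
    (h : IsSplitStage A W p U T) :
    ∃ U' T', IsSplitStage A W p U' T' ∧ U' ∪ T' = W := by
  by_cases hpending : ∃ z ∈ W, z ∉ U ∧ z ∉ T
  · obtain ⟨z, hz, hzU, hzT⟩ := hpending
    exact (h.insert hz hzU hzT).exists_union_eq
  · push Not at hpending
    refine ⟨U, T, h, subset_antisymm (union_subset h.left_subset h.right_subset) fun z hz => ?_⟩
    by_cases hzU : z ∈ U
    · exact mem_union_left T hzU
    · exact mem_union_right U (hpending z hz hzU)
termination_by (W \ U).card
decreasing_by
  rw [sdiff_insert]
  exact card_erase_lt_of_mem (mem_sdiff.2 ⟨hz, hzU⟩)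

theorem exists_isSplitStage_union_eq (A : V → V → ℝ) {W : Finset V} {p : V} (hp : p ∈ W)
    (hW : (W.erase p).Nonempty) : ∃ U T, IsSplitStage A W p U T ∧ U ∪ T = W :=
  (IsSplitStage.singleton hp hW).exists_union_eq

theorem hasHomogeneousBlock_or_exists_isCriticalBelow (W : Finset V) (hW : W.Nonempty)
    (c : ℝ) : HasHomogeneousBlock A W c ∨ ∃ y ∈ W, IsCriticalBelow A W c y := by
  induction W using Finset.strongInduction generalizing c with
  | H W ih =>
  by_cases hoff : ∃ p ∈ W, ∃ q ∈ W, p ≠ q ∧ A p q < c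
  · obtain ⟨p, hp, q, hq, hpq, hlt⟩ := hoff
    obtain ⟨U, T, h, hUT⟩ := exists_isSplitStage_union_eq A hp ⟨q, mem_erase.2 ⟨hpq.symm, hq⟩⟩
    obtain ⟨c₀, hle, hattain⟩ := h.exists_bound
    have hTW : T ⊂ W := (ssubset_iff_of_subset h.right_subset).2 ⟨p, hp, h.notMem_right⟩
    rcases ih T hTW h.right_nonempty (max c c₀) with hblock | ⟨y, hy, hcrit⟩
    · exact Or.inl (h.hasHomogeneousBlock hUT hle hblock)
    · exact Or.inr ⟨y, h.right_subset hy, h.isCriticalBelow hUT hattain hy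
        ((h.right_minimizes y hy q hq hpq.symm).trans_lt hlt) hcrit⟩
  push Not at hoff
  by_cases hdiag : ∃ y ∈ W, A y y < c
  · obtain ⟨y, hy, hyc⟩ := hdiag
    exact Or.inr ⟨y, hy, isCriticalBelow_of_diag_lt hy hyc hoff⟩
  push Not at hdiag
  rcases le_or_gt W.card 1 with hcard | hcard
  · obtain ⟨y, hy⟩ := hW
    exact Or.inr ⟨y, hy, fun u hu huy => absurd (card_le_one.1 hcard u hu y hy) huy⟩
  · refine Or.inl ⟨W, subset_rfl, hcard, fun x hx hxW => absurd hx hxW, fun u hu w hw => ?_⟩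
    rcases eq_or_ne u w with rfl | huw
    · exact hdiag u hu
    · exact hoff u hu w hw huw

end

theorem stmt_6 {V : Type*} [Fintype V] [DecidableEq V] (A : V → V → ℝ)
    (hsym : ∀ u v : V, A u v = A v u)
    (hV : 2 ≤ Fintype.card V) :
    (∃ a : V, IsCritical A a) ∨
    (∃ S : Finset V, 2 ≤ S.card ∧ S.card ≤ Fintype.card V - 1 ∧
      StronglyHomogeneous A S) := by
  obtain ⟨p⟩ : Nonempty V := Fintype.card_pos_iff.1 (by omega)
  have hp : p ∈ (univ : Finset V) := mem_univ p
  obtain ⟨U, T, h, hUT⟩ := exists_isSplitStage_union_eq A hp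
    (card_pos.1 (by rw [card_erase_of_mem hp, card_univ]; omega))
  obtain ⟨c₀, hle, hattain⟩ := h.exists_bound
  rcases hasHomogeneousBlock_or_exists_isCriticalBelow T h.right_nonempty c₀ with
    ⟨S, hST, hS2, hS, hfloor⟩ | ⟨y, hy, hcrit⟩
  · have hSp : S ⊆ univ.erase p := fun s hs =>
      mem_erase.2 ⟨fun hsp => h.notMem_right (hsp ▸ hST hs), mem_univ s⟩
    refine Or.inr ⟨S, hS2, ?_, fun x hx => h.stronglyHomogeneousIn hUT hST hS hle hfloor x
      (mem_univ x) hx⟩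
    simpa [card_erase_of_mem hp] using card_le_card hSp
  · refine Or.inl ⟨y, fun x z hx hz _ => avoids_of_reachable hsym ?_⟩
    exact (h.reachable_of_isCriticalBelow hUT hattain hy hcrit (mem_univ x) hx).trans
      (h.reachable_of_isCriticalBelow hUT hattain hy hcrit (mem_univ z) hz).symm
end

section
/- Let X_0 = {a}, X_1, ..., X_k be the similarity layers of a symmetric matrix A rooted at a. If x ∈ X_i and y, z ∈ X_j with i < j, then A[x,y] = A[x,z]. -/
section

variable {V : Type*} (A : V → V → ℝ) (a : V)

theorem mem_simLayer_succ {n : ℕ} {y : V} :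
    y ∈ simLayer A a (n + 1) ↔ y ∉ (simLayersAux A a n).2 ∧
      ∀ x ∈ (simLayersAux A a n).2, ∀ z ∉ (simLayersAux A a n).2, A x z ≤ A x y :=
  Iff.rfl

theorem simLayer_subset_union (n : ℕ) : simLayer A a n ⊆ (simLayersAux A a n).2 := by
  cases n with
  | zero => exact subset_rfl
  | succ n => exact Set.subset_union_right

theorem monotone_simLayersAux_snd : Monotone fun n => (simLayersAux A a n).2 :=
  monotone_nat_of_le_succ fun _ => Set.subset_union_left

theorem apply_eq_of_mem_simLayer_succ {n : ℕ} {x y z : V} (hx : x ∈ (simLayersAux A a n).2)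
    (hy : y ∈ simLayer A a (n + 1)) (hz : z ∈ simLayer A a (n + 1)) : A x y = A x z := by
  rw [mem_simLayer_succ] at hy hz
  exact le_antisymm (hz.2 x hx y hy.1) (hy.2 x hx z hz.1)

end

theorem stmt_8_general {V : Type*} (A : V → V → ℝ)
    (a : V)
    (i j : ℕ) (hij : i < j) (x y z : V)
    (hx : x ∈ simLayer A a i) (hy : y ∈ simLayer A a j) (hz : z ∈ simLayer A a j) :
    A x y = A x z := by
  obtain ⟨m, rfl⟩ := Nat.exists_eq_add_one_of_ne_zero (Nat.ne_zero_of_lt hij)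
  have hxU : x ∈ (simLayersAux A a m).2 :=
    monotone_simLayersAux_snd A a (Nat.le_of_lt_succ hij) (simLayer_subset_union A a i hx)
  exact apply_eq_of_mem_simLayer_succ A a hxU hy hz

theorem stmt_8 {V : Type*} (A : V → V → ℝ)
    (hsym : ∀ u v : V, A u v = A v u) (a : V)
    (i j : ℕ) (hij : i < j) (x y z : V)
    (hx : x ∈ simLayer A a i) (hy : y ∈ simLayer A a j) (hz : z ∈ simLayer A a j) :
    A x y = A x z :=
  stmt_8_general A a i j hij x y z hx hy hz
end

section
/- Let X_0 = {a}, X_1, ..., X_k be the similarity layers of a symmetric matrix A rooted at a. If x ∈ X_i, y ∈ X_j, z ∈ X_h with 0 ≤ i < j < h ≤ k, then A[x,z] ≤ A[x,y]. -/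
theorem simLayersAux_snd_mono {V : Type*} (A : V → V → ℝ) (a : V) :
    Monotone fun n => (simLayersAux A a n).2 :=
  monotone_nat_of_le_succ fun _ => Set.subset_union_left

theorem simLayer_subset_simLayersAux_snd {V : Type*} (A : V → V → ℝ) (a : V) (n : ℕ) :
    simLayer A a n ⊆ (simLayersAux A a n).2 := by
  cases n
  exacts [subset_rfl, Set.subset_union_right]

theorem notMem_simLayersAux_snd_of_lt {V : Type*} {A : V → V → ℝ} {a z : V} {m n : ℕ}
    (hmn : m < n) (hz : z ∈ simLayer A a n) : z ∉ (simLayersAux A a m).2 := by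
  obtain ⟨k, rfl⟩ := Nat.exists_eq_add_of_lt hmn
  exact fun hzm => hz.1 (simLayersAux_snd_mono A a (Nat.le_add_right m k) hzm)

theorem stmt_9_general {V : Type*} (A : V → V → ℝ) (a : V)
    (i j h : ℕ) (hij : i < j) (hjh : j < h) (x y z : V)
    (hx : x ∈ simLayer A a i) (hy : y ∈ simLayer A a j) (hz : z ∈ simLayer A a h) :
    A x z ≤ A x y := by
  obtain ⟨m, rfl⟩ := Nat.exists_eq_add_one_of_ne_zero (Nat.ne_zero_of_lt hij)
  have hxm : x ∈ (simLayersAux A a m).2 :=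
    simLayersAux_snd_mono A a (Nat.le_of_lt_succ hij) (simLayer_subset_simLayersAux_snd A a i hx)
  -- `y ∈ X_{m+1}` is maximal, from each point of `X_0 ∪ ⋯ ∪ X_m`, among points outside it.
  exact hy.2 x hxm z (notMem_simLayersAux_snd_of_lt (Nat.lt_of_succ_lt hjh) hz)

theorem stmt_9 {V : Type*} (A : V → V → ℝ)
    (hsym : ∀ u v : V, A u v = A v u) (a : V)
    (i j h : ℕ) (hij : i < j) (hjh : j < h) (x y z : V)
    (hx : x ∈ simLayer A a i) (hy : y ∈ simLayer A a j) (hz : z ∈ simLayer A a h) :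
    A x z ≤ A x y :=
  stmt_9_general A a i j h hij hjh x y z hx hy hz
end

section
/- Let G be a graph containing an induced cycle C = (x_1, ..., x_k) of length k ≥ 4. Then {x_1, x_2, x_k} is a weighted asteroidal triple of the adjacency matrix A_G of G. -/
/-! For a 0/1 matrix, an edge `uw` avoids `z` exactly when `u` and `w` are not both adjacent to
`z`. On the induced cycle the only neighbours of `x₁` are `x₂` and `xₖ`, and the only
neighbours of `x₂` are `x₁` and `x₃`; since `k ≥ 4`, `x₃ ≠ xₖ`. Hence the edge `x₁x₂` avoids
`xₖ`, the edge `xₖx₁` avoids `x₂`, and the arc `x₂x₃⋯xₖ` avoids `x₁`, because no two consecutive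
vertices of it are both neighbours of `x₁`. -/

section Avoidance

variable {V : Type*} {A : V → V → ℝ} {z : V}

theorem avoids_ofFn {n : ℕ} (f : Fin (n + 1) → V) (hf : Function.Injective f)
    (hstep : ∀ (i : ℕ) (hi : i + 1 < n + 1),
      min (A (f ⟨i, by omega⟩) z) (A (f ⟨i + 1, hi⟩) z) < A (f ⟨i, by omega⟩) (f ⟨i + 1, hi⟩)) :
    Avoids A z (f 0) (f (Fin.last n)) :=
  ⟨List.ofFn f, List.nodup_ofFn.mpr hf, by simp,
    by rw [List.getLast?_eq_some_getLast (by simp), List.getLast_ofFn]; rfl,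
    List.isChain_ofFn.mpr hstep⟩

theorem avoids_pair {x y : V} (hxy : x ≠ y) (h : min (A x z) (A y z) < A x y) :
    Avoids A z x y :=
  ⟨[x, y], by simpa using hxy, rfl, rfl, List.isChain_pair.mpr h⟩

end Avoidance

theorem SimpleGraph.min_adjMatrix_lt_adjMatrix_iff {V : Type*} (G : SimpleGraph V)
    [DecidableRel G.Adj] {u w z : V} :
    min (G.adjMatrix ℝ u z) (G.adjMatrix ℝ w z) < G.adjMatrix ℝ u w ↔
      G.Adj u w ∧ ¬(G.Adj u z ∧ G.Adj w z) := by
  simp only [SimpleGraph.adjMatrix_apply]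
  by_cases huw : G.Adj u w <;> by_cases huz : G.Adj u z <;> by_cases hwz : G.Adj w z <;>
    simp [huw, huz, hwz]

theorem adj_mk_iff_of_induced_cycle {V : Type*} {G : SimpleGraph V} {k : ℕ} {c : Fin k → V}
    (hcyc : ∀ i j : Fin k,
      G.Adj (c i) (c j) ↔ ((j : ℕ) = ((i : ℕ) + 1) % k ∨ (i : ℕ) = ((j : ℕ) + 1) % k))
    {a b : ℕ} (ha : a < k) (hb : b < k) :
    G.Adj (c ⟨a, ha⟩) (c ⟨b, hb⟩) ↔
      b = a + 1 ∨ a = b + 1 ∨ (a = 0 ∧ b = k - 1) ∨ (a = k - 1 ∧ b = 0) := by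
  have hmod : ∀ x < k, (x + 1) % k = if x + 1 = k then 0 else x + 1 := by
    intro x hx
    split_ifs with h
    · rw [h, Nat.mod_self]
    · exact Nat.mod_eq_of_lt (by omega)
  rw [hcyc, hmod a ha, hmod b hb]
  split_ifs <;> simp only <;> omega

theorem stmt_16 {V : Type*} (G : SimpleGraph V) [DecidableRel G.Adj]
    (k : ℕ) (hk : 4 ≤ k) (c : Fin k → V) (hinj : Function.Injective c)
    (hcyc : ∀ i j : Fin k,
      G.Adj (c i) (c j) ↔ ((j : ℕ) = ((i : ℕ) + 1) % k ∨ (i : ℕ) = ((j : ℕ) + 1) % k)) :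
    IsWAT (fun u v : V => if G.Adj u v then (1 : ℝ) else 0)
      (c ⟨0, by omega⟩) (c ⟨1, by omega⟩) (c ⟨k - 1, by omega⟩) := by
  change IsWAT (G.adjMatrix ℝ) _ _ _
  have hadj := @adj_mk_iff_of_induced_cycle _ _ _ _ hcyc
  have hne : ∀ {a b : ℕ} (ha : a < k) (hb : b < k), a ≠ b → c ⟨a, ha⟩ ≠ c ⟨b, hb⟩ :=
    fun _ _ hab h => hab (Fin.mk.inj_iff.mp (hinj h))
  refine ⟨hne _ _ (by omega), hne _ _ (by omega), hne _ _ (by omega), ?_, ?_, ?_⟩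
  · refine avoids_pair (hne _ _ (by omega)) (G.min_adjMatrix_lt_adjMatrix_iff.mpr ?_)
    rw [hadj, hadj, hadj]
    omega
  · have harc := avoids_ofFn (A := G.adjMatrix ℝ) (z := c ⟨0, by omega⟩) (n := k - 2)
      (fun i => c ⟨i + 1, by omega⟩) (fun i j h => Fin.ext (by simpa using hinj h))
      (fun i hi => G.min_adjMatrix_lt_adjMatrix_iff.mpr
        (by dsimp only; rw [hadj, hadj, hadj]; omega))
    convert harc using 3 <;> simp only [Fin.val_zero, Fin.val_last]
    omega
  · refine avoids_pair (hne _ _ (by omega)) (G.min_adjMatrix_lt_adjMatrix_iff.mpr ?_)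
    rw [hadj, hadj, hadj]
    omega
end
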